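/- arXiv:2005.03936 — 4 statements merged into one kernel-verified Lean document; each statement's English description precedes it below -/
import Mathlib

section
/- The map f : ℓ² → ℓ² defined by f(u₁,u₂,u₃,...) = (u₁²+u₂², u₃, u₄, ...) is a proper map, i.e., the preimage of every compact subset of ℓ² is compact. -/
/-!
Splitting off the first coordinate is a homeomorphism `ℓ² ≃ ℝ × ℓ²`, and splitting off the first
two is one `ℓ² ≃ (ℝ × ℝ) × ℓ²`. Through these, `f` becomes `q × id` with `q (a, b) = a² + b²`,
and `q` is proper because `q x ≥ ‖x‖²` on `ℝ × ℝ`. Products and composites of proper maps are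
proper.
-/

open Filter

local notation "ℓ²(" E ")" => lp (fun _ : ℕ => E) 2

namespace lp

variable {E : Type*} [NormedAddCommGroup E]

theorem memℓp_two_iff {f : ℕ → E} : Memℓp f 2 ↔ Summable fun n => ‖f n‖ ^ 2 := by
  simp [memℓp_gen_iff (p := 2) (by norm_num)]

theorem norm_sq_eq_tsum (x : ℓ²(E)) : ‖x‖ ^ 2 = ∑' n, ‖x n‖ ^ 2 := by
  simpa using lp.norm_rpow_eq_tsum (p := 2) (by norm_num) x

theorem summable_norm_sq (x : ℓ²(E)) : Summable fun n => ‖x n‖ ^ 2 :=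
  memℓp_two_iff.1 x.2

def tail (x : ℓ²(E)) : ℓ²(E) :=
  ⟨fun n => x (n + 1), memℓp_two_iff.2 <| (summable_nat_add_iff 1).2 (summable_norm_sq x)⟩

def cons (a : E) (x : ℓ²(E)) : ℓ²(E) :=
  ⟨fun | 0 => a | n + 1 => x n,
    memℓp_two_iff.2 <| (summable_nat_add_iff 1).1 (summable_norm_sq x)⟩

@[simp] theorem cons_head_tail (x : ℓ²(E)) : cons (x 0) (tail x) = x := by
  ext (_ | n) <;> rfl

theorem cons_sub_cons (a b : E) (x y : ℓ²(E)) : cons a x - cons b y = cons (a - b) (x - y) := by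
  ext (_ | n) <;> rfl

theorem tail_sub (x y : ℓ²(E)) : tail (x - y) = tail x - tail y := rfl

theorem norm_cons_sq (a : E) (x : ℓ²(E)) : ‖cons a x‖ ^ 2 = ‖a‖ ^ 2 + ‖x‖ ^ 2 := by
  rw [norm_sq_eq_tsum, (summable_norm_sq _).tsum_eq_zero_add, norm_sq_eq_tsum]
  rfl

theorem norm_tail_le (x : ℓ²(E)) : ‖tail x‖ ≤ ‖x‖ := by
  have h := norm_cons_sq (x 0) (tail x)
  rw [cons_head_tail] at h
  exact (pow_le_pow_iff_left₀ (norm_nonneg _) (norm_nonneg _) two_ne_zero).1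
    (by rw [h]; exact le_add_of_nonneg_left (sq_nonneg _))

theorem norm_cons_le (a : E) (x : ℓ²(E)) : ‖cons a x‖ ≤ ‖a‖ + ‖x‖ :=
  (pow_le_pow_iff_left₀ (norm_nonneg _) (by positivity) two_ne_zero).1
    (by rw [norm_cons_sq]; nlinarith [norm_nonneg a, norm_nonneg x])

theorem lipschitzWith_one_tail : LipschitzWith 1 (tail : ℓ²(E) → ℓ²(E)) :=
  LipschitzWith.of_dist_le_mul fun x y => by
    simpa [dist_eq_norm, tail_sub] using norm_tail_le (x - y)

theorem lipschitzWith_two_cons : LipschitzWith 2 fun p : E × ℓ²(E) => cons p.1 p.2 :=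
  LipschitzWith.of_dist_le_mul fun p q => by
    rw [dist_eq_norm, dist_eq_norm, cons_sub_cons, NNReal.coe_ofNat, two_mul]
    exact (norm_cons_le _ _).trans (add_le_add (norm_fst_le (p - q)) (norm_snd_le (p - q)))

noncomputable def consHomeomorph : E × ℓ²(E) ≃ₜ ℓ²(E) where
  toFun p := cons p.1 p.2
  invFun x := (x 0, tail x)
  left_inv _ := rfl
  right_inv := cons_head_tail
  continuous_toFun := lipschitzWith_two_cons.continuous
  continuous_invFun :=
    (lipschitzWith_one_eval 2 0).continuous.prodMk lipschitzWith_one_tail.continuous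

noncomputable def consConsHomeomorph : (E × E) × ℓ²(E) ≃ₜ ℓ²(E) :=
  (Homeomorph.prodAssoc E E ℓ²(E)).trans
    (((Homeomorph.refl E).prodCongr consHomeomorph).trans consHomeomorph)

end lp

theorem isProperMap_sq_add_sq : IsProperMap fun x : ℝ × ℝ => x.1 ^ 2 + x.2 ^ 2 := by
  refine isProperMap_iff_tendsto_cocompact.2 ⟨by fun_prop, ?_⟩
  have hle (x : ℝ × ℝ) : ‖x‖ ^ 2 ≤ x.1 ^ 2 + x.2 ^ 2 := by
    rcases max_cases |x.1| |x.2| with ⟨h, -⟩ | ⟨h, -⟩ <;>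
      simp only [Prod.norm_def, Real.norm_eq_abs, h, sq_abs] <;> nlinarith
  refine (tendsto_atTop_mono hle ?_).mono_right atTop_le_cocompact
  exact (tendsto_pow_atTop two_ne_zero).comp tendsto_norm_cocompact_atTop

/-- The map `f : ℓ² → ℓ²`, `f(u₁,u₂,u₃,…) = (u₁²+u₂², u₃, u₄, …)`, is proper. -/
theorem stmt0 (f : lp (fun _ : ℕ => ℝ) 2 → lp (fun _ : ℕ => ℝ) 2)
    (hf0 : ∀ u : lp (fun _ : ℕ => ℝ) 2, f u 0 = u 0 ^ 2 + u 1 ^ 2)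
    (hfs : ∀ u : lp (fun _ : ℕ => ℝ) 2, ∀ n : ℕ, f u (n + 1) = u (n + 2)) :
    IsProperMap f := by
  have hf : f = lp.consHomeomorph ∘ Prod.map (fun x : ℝ × ℝ => x.1 ^ 2 + x.2 ^ 2) id ∘
      lp.consConsHomeomorph.symm := by
    funext u
    ext (_ | n)
    · exact hf0 u
    · exact hfs u n
  rw [hf]
  exact lp.consHomeomorph.isProperMap.comp
    ((isProperMap_sq_add_sq.prodMap isProperMap_id).comp lp.consConsHomeomorph.symm.isProperMap)
end

section
/- Let h₀ = p₀ ∘ g₀ : ℂ² → ℂ × ℝ, where g₀(z₁,z₂) = (2 z₁ conj(z₂), |z₁|² − |z₂|²) and p₀(z,t) = (z, t²). Then the preimage h₀⁻¹(0,1) (identifying ℂ×ℝ ≅ ℝ³ and the point (0,0,1)) equals the union of the two circles {(z₁,0) : |z₁| = 1} and {(0,z₂) : |z₂| = 1} in ℂ². -/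
open Set

theorem norm_sq_sq_eq_one_iff {E : Type*} [SeminormedAddGroup E] (x : E) :
    (‖x‖ ^ 2) ^ 2 = 1 ↔ ‖x‖ = 1 := by
  rw [← pow_mul]
  exact pow_eq_one_iff_of_nonneg (norm_nonneg x) (by norm_num)

/-- For `h₀ = p₀ ∘ g₀ : ℂ² → ℂ × ℝ`, with `g₀(z₁,z₂) = (2 z₁ conj z₂, |z₁|² − |z₂|²)`
and `p₀(z,t) = (z,t²)`, the preimage of `(0,0,1) ∈ ℝ³ ≅ ℂ × ℝ` is the union of the
two circles `{(z₁,0) : |z₁| = 1}` and `{(0,z₂) : |z₂| = 1}` in `ℂ²`. -/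
theorem stmt5 :
    (fun p : ℂ × ℂ =>
        ((2 * p.1 * (starRingEnd ℂ) p.2,
          (‖p.1‖ ^ 2 - ‖p.2‖ ^ 2) ^ 2) : ℂ × ℝ))
      ⁻¹' {((0 : ℂ), (1 : ℝ))} =
    {p : ℂ × ℂ | ‖p.1‖ = 1 ∧ p.2 = 0} ∪
      {p : ℂ × ℂ | p.1 = 0 ∧ ‖p.2‖ = 1} := by
  ext ⟨z₁, z₂⟩
  simp only [mem_preimage, mem_singleton_iff, Prod.mk.injEq, mem_union, mem_ofPred_eq,
    mul_eq_zero, map_eq_zero, two_ne_zero, false_or]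
  rcases eq_or_ne z₁ 0 with rfl | h₁
  · simp only [norm_zero, zero_pow two_ne_zero, zero_sub, neg_sq, norm_sq_sq_eq_one_iff]
    simp
  · rcases eq_or_ne z₂ 0 with rfl | h₂
    · simp only [norm_zero, zero_pow two_ne_zero, sub_zero, norm_sq_sq_eq_one_iff]
      simp
    · simp [h₁, h₂]
end

section
/- Let H₀ be a finite-dimensional subspace of a Hilbert space H with orthogonal complement H₀', let H₁ be a finite-dimensional subspace of H with complement H₁', and let D₀ : H₀' → H₁' be an isomorphism. Then the set U of bounded operators F : H₀ ⊕ H₀' → H₁ ⊕ H₁' whose lower-right block D : H₀' → H₁' is an isomorphism is open in the space of bounded operators, and every F ∈ U is Fredholm of index dim H₀ − dim H₁. -/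
/-!
If the lower-right block `e` of `T = [[A, B], [C, e]]` is invertible, then row and column shears
turn `T` into the block-diagonal operator `(A - B e⁻¹ C) ⊕ e`. Shears are isomorphisms, so they
preserve kernels, cokernels and closedness of the range, and `e` contributes nothing; hence `T`
is Fredholm with the index of the Schur complement `A - B e⁻¹ C`, a map between
finite-dimensional spaces, whose index is `dim H₀ - dim H₁` by rank-nullity. Openness holds
because invertible operators form an open set and `T ↦ e` is continuous.
-/

universe u

open Module ContinuousLinearMap

section ProdQuotient

variable {R M N : Type*} [Ring R] [AddCommGroup M] [Module R M] [AddCommGroup N] [Module R N]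

def Submodule.prodEquivProd (p : Submodule R M) (q : Submodule R N) : p.prod q ≃ₗ[R] p × q where
  toFun x := (⟨x.1.1, x.2.1⟩, ⟨x.1.2, x.2.2⟩)
  invFun x := ⟨(x.1, x.2), x.1.2, x.2.2⟩
  map_add' _ _ := rfl
  map_smul' _ _ := rfl

noncomputable def Submodule.quotientProdEquiv (p : Submodule R M) (q : Submodule R N) :
    ((M × N) ⧸ p.prod q) ≃ₗ[R] (M ⧸ p) × (N ⧸ q) :=
  (Submodule.quotEquivOfEq _ _ (by rw [LinearMap.ker_prodMap, p.ker_mkQ, q.ker_mkQ])).trans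
    ((p.mkQ.prodMap q.mkQ).quotKerEquivOfSurjective (p.mkQ_surjective.prodMap q.mkQ_surjective))

end ProdQuotient

section Fredholm

variable {𝕜 E F E' F' : Type*} [NontriviallyNormedField 𝕜]
  [NormedAddCommGroup E] [NormedSpace 𝕜 E] [NormedAddCommGroup F] [NormedSpace 𝕜 F]
  [NormedAddCommGroup E'] [NormedSpace 𝕜 E'] [NormedAddCommGroup F'] [NormedSpace 𝕜 F']

def ContinuousLinearMap.HasFredholmIndex (T : E →L[𝕜] F) (n : ℤ) : Prop :=
  FiniteDimensional 𝕜 (LinearMap.ker (T : E →ₗ[𝕜] F)) ∧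
    IsClosed (LinearMap.range (T : E →ₗ[𝕜] F) : Set F) ∧
    FiniteDimensional 𝕜 (F ⧸ LinearMap.range (T : E →ₗ[𝕜] F)) ∧
    (finrank 𝕜 (LinearMap.ker (T : E →ₗ[𝕜] F)) : ℤ) -
      (finrank 𝕜 (F ⧸ LinearMap.range (T : E →ₗ[𝕜] F)) : ℤ) = n

namespace ContinuousLinearMap.HasFredholmIndex

variable {T : E →L[𝕜] F} {n : ℤ}

theorem of_linearEquiv {T' : E' →L[𝕜] F'} (hT : T.HasFredholmIndex n)
    (eKer : LinearMap.ker (T : E →ₗ[𝕜] F) ≃ₗ[𝕜] LinearMap.ker (T' : E' →ₗ[𝕜] F'))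
    (eCoker : (F ⧸ LinearMap.range (T : E →ₗ[𝕜] F)) ≃ₗ[𝕜] F' ⧸ LinearMap.range (T' : E' →ₗ[𝕜] F'))
    (hclosed : IsClosed (LinearMap.range (T' : E' →ₗ[𝕜] F') : Set F')) :
    T'.HasFredholmIndex n := by
  obtain ⟨hker, -, hcoker, hindex⟩ := hT
  refine ⟨eKer.finiteDimensional, hclosed, eCoker.finiteDimensional, ?_⟩
  rwa [← eKer.finrank_eq, ← eCoker.finrank_eq]

theorem comp_continuousLinearEquiv (hT : T.HasFredholmIndex n) (R : E' ≃L[𝕜] E) :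
    (T.comp (R : E' →L[𝕜] E)).HasFredholmIndex n := by
  have hrange : LinearMap.range ((T.comp (R : E' →L[𝕜] E)) : E' →ₗ[𝕜] F) =
      LinearMap.range (T : E →ₗ[𝕜] F) :=
    LinearMap.range_comp_of_range_eq_top _ R.toLinearEquiv.range
  refine hT.of_linearEquiv (R.toLinearEquiv.ofSubmodule' _).symm
    (Submodule.quotEquivOfEq _ _ hrange.symm) ?_
  exact hrange ▸ hT.2.1

theorem continuousLinearEquiv_comp (hT : T.HasFredholmIndex n) (L : F ≃L[𝕜] F') :
    ((L : F →L[𝕜] F').comp T).HasFredholmIndex n := by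
  have hrange : LinearMap.range (((L : F →L[𝕜] F').comp T) : E →ₗ[𝕜] F') =
      (LinearMap.range (T : E →ₗ[𝕜] F)).map (L.toLinearEquiv : F →ₗ[𝕜] F') :=
    LinearMap.range_comp _ _
  refine hT.of_linearEquiv (LinearEquiv.ofEq _ _ (L.toLinearEquiv.ker_comp _).symm)
    (Submodule.Quotient.equiv _ _ L.toLinearEquiv hrange.symm) ?_
  rw [hrange, Submodule.map_coe]
  exact L.isClosed_image.mpr hT.2.1

theorem prodMap {T' : E' →L[𝕜] F'} {m : ℤ} (hT : T.HasFredholmIndex n)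
    (hT' : T'.HasFredholmIndex m) : (T.prodMap T').HasFredholmIndex (n + m) := by
  obtain ⟨hker, hclosed, hcoker, hindex⟩ := hT
  obtain ⟨hker', hclosed', hcoker', hindex'⟩ := hT'
  have hker_eq : LinearMap.ker ((T.prodMap T') : E × E' →ₗ[𝕜] F × F') =
      (LinearMap.ker (T : E →ₗ[𝕜] F)).prod (LinearMap.ker (T' : E' →ₗ[𝕜] F')) :=
    LinearMap.ker_prodMap _ _
  have hrange_eq : LinearMap.range ((T.prodMap T') : E × E' →ₗ[𝕜] F × F') =
      (LinearMap.range (T : E →ₗ[𝕜] F)).prod (LinearMap.range (T' : E' →ₗ[𝕜] F')) :=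
    LinearMap.range_prodMap _ _
  let eKer := (LinearEquiv.ofEq _ _ hker_eq).trans (Submodule.prodEquivProd _ _)
  let eCoker := (Submodule.quotEquivOfEq _ _ hrange_eq).trans (Submodule.quotientProdEquiv _ _)
  refine ⟨eKer.symm.finiteDimensional, ?_, eCoker.symm.finiteDimensional, ?_⟩
  · rw [hrange_eq, Submodule.prod_coe]
    exact hclosed.prod hclosed'
  · rw [eKer.finrank_eq, eCoker.finrank_eq, finrank_prod, finrank_prod, ← hindex, ← hindex']
    push_cast
    ring

end ContinuousLinearMap.HasFredholmIndex

theorem ContinuousLinearEquiv.hasFredholmIndex_zero (e : E ≃L[𝕜] F) :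
    (e : E →L[𝕜] F).HasFredholmIndex 0 := by
  have hker : LinearMap.ker ((e : E →L[𝕜] F) : E →ₗ[𝕜] F) = ⊥ := e.toLinearEquiv.ker
  have hrange : LinearMap.range ((e : E →L[𝕜] F) : E →ₗ[𝕜] F) = ⊤ := e.toLinearEquiv.range
  have : Subsingleton (F ⧸ LinearMap.range ((e : E →L[𝕜] F) : E →ₗ[𝕜] F)) :=
    Submodule.Quotient.subsingleton_iff.mpr hrange
  refine ⟨?_, ?_, inferInstance, ?_⟩
  · rw [hker]; infer_instance
  · rw [hrange]; exact isClosed_univ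
  · rw [hker, finrank_bot, finrank_zero_of_subsingleton]; rfl

theorem ContinuousLinearMap.hasFredholmIndex_of_finiteDimensional [CompleteSpace 𝕜]
    [FiniteDimensional 𝕜 E] [FiniteDimensional 𝕜 F] (T : E →L[𝕜] F) :
    T.HasFredholmIndex (finrank 𝕜 E - finrank 𝕜 F) := by
  refine ⟨inferInstance, Submodule.closed_of_finiteDimensional _, inferInstance, ?_⟩
  have hrank := LinearMap.finrank_range_add_finrank_ker (T : E →ₗ[𝕜] F)
  have hquot := (LinearMap.range (T : E →ₗ[𝕜] F)).finrank_quotient_add_finrank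
  omega

end Fredholm

section Blocks

variable {𝕜 E E' G G' : Type*} [NontriviallyNormedField 𝕜]
  [NormedAddCommGroup E] [NormedSpace 𝕜 E] [NormedAddCommGroup E'] [NormedSpace 𝕜 E']
  [NormedAddCommGroup G] [NormedSpace 𝕜 G] [NormedAddCommGroup G'] [NormedSpace 𝕜 G']

theorem ContinuousLinearMap.exists_eq_comp_prodMap_comp (T : E × E' →L[𝕜] G × G')
    (e : E' ≃L[𝕜] G') (he : (e : E' →L[𝕜] G') = (snd 𝕜 G G').comp (T.comp (inr 𝕜 E E'))) :
    ∃ (S : E →L[𝕜] G) (L : (G × G') ≃L[𝕜] G × G') (R : (E × E') ≃L[𝕜] E × E'),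
      T = (L : G × G' →L[𝕜] G × G').comp
        ((S.prodMap (e : E' →L[𝕜] G')).comp (R : E × E' →L[𝕜] E × E')) := by
  set A := (fst 𝕜 G G').comp (T.comp (inl 𝕜 E E'))
  set B := (fst 𝕜 G G').comp (T.comp (inr 𝕜 E E'))
  set C := (snd 𝕜 G G').comp (T.comp (inl 𝕜 E E'))
  -- the upper shear `(u, v) ↦ (u + B e⁻¹ v, v)`, as `skewProd` conjugated by the swap
  let L : (G × G') ≃L[𝕜] G × G' := (ContinuousLinearEquiv.prodComm 𝕜 G G').trans
    (((ContinuousLinearEquiv.refl 𝕜 G').skewProd (.refl 𝕜 G) (B.comp (e.symm : G' →L[𝕜] E'))).trans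
      (ContinuousLinearEquiv.prodComm 𝕜 G' G))
  let R : (E × E') ≃L[𝕜] E × E' :=
    (ContinuousLinearEquiv.refl 𝕜 E).skewProd (.refl 𝕜 E') ((e.symm : G' →L[𝕜] E').comp C)
  refine ⟨A - B.comp ((e.symm : G' →L[𝕜] E').comp C), L, R, ?_⟩
  have he_apply (y : E') : (T (0, y)).2 = e y := congr($he y).symm
  ext x <;> simp [L, R, A, B, C, he_apply, ← Prod.zero_eq_mk]

theorem isOpen_setOf_exists_equiv_eq_comp_inr [CompleteSpace E'] :
    IsOpen {T : E × E' →L[𝕜] G × G' |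
      ∃ e : E' ≃L[𝕜] G', (e : E' →L[𝕜] G') = (snd 𝕜 G G').comp (T.comp (inr 𝕜 E E'))} :=
  ContinuousLinearEquiv.isOpen.preimage
    ((continuous_id.clm_comp_const (inr 𝕜 E E')).const_clm_comp (snd 𝕜 G G'))

end Blocks

theorem stmt16_general {H₀ H₀' H₁ H₁' : Type u}
    [NormedAddCommGroup H₀] [InnerProductSpace ℝ H₀] [FiniteDimensional ℝ H₀]
    [NormedAddCommGroup H₀'] [InnerProductSpace ℝ H₀'] [CompleteSpace H₀']
    [NormedAddCommGroup H₁] [InnerProductSpace ℝ H₁] [FiniteDimensional ℝ H₁]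
    [NormedAddCommGroup H₁'] [InnerProductSpace ℝ H₁']
    (U : Set ((H₀ × H₀') →L[ℝ] (H₁ × H₁'))) (hU : U =
      {F | ∃ e : H₀' ≃L[ℝ] H₁', (e : H₀' →L[ℝ] H₁') =
        (ContinuousLinearMap.snd ℝ H₁ H₁').comp
          (F.comp (ContinuousLinearMap.inr ℝ H₀ H₀'))}) :
    IsOpen U ∧
    ∀ F ∈ U, FiniteDimensional ℝ (LinearMap.ker (F : (H₀ × H₀') →ₗ[ℝ] (H₁ × H₁'))) ∧
      IsClosed (LinearMap.range (F : (H₀ × H₀') →ₗ[ℝ] (H₁ × H₁')) : Set (H₁ × H₁')) ∧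
      FiniteDimensional ℝ ((H₁ × H₁') ⧸ LinearMap.range (F : (H₀ × H₀') →ₗ[ℝ] (H₁ × H₁'))) ∧
      (Module.finrank ℝ (LinearMap.ker (F : (H₀ × H₀') →ₗ[ℝ] (H₁ × H₁'))) : ℤ) -
        (Module.finrank ℝ ((H₁ × H₁') ⧸ LinearMap.range (F : (H₀ × H₀') →ₗ[ℝ] (H₁ × H₁'))) : ℤ) =
      (Module.finrank ℝ H₀ : ℤ) - (Module.finrank ℝ H₁ : ℤ) := by
  subst hU
  refine ⟨isOpen_setOf_exists_equiv_eq_comp_inr, ?_⟩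
  rintro F ⟨e, he⟩
  obtain ⟨S, L, R, rfl⟩ := F.exists_eq_comp_prodMap_comp e he
  have hfred := ((S.hasFredholmIndex_of_finiteDimensional.prodMap
    e.hasFredholmIndex_zero).comp_continuousLinearEquiv R).continuousLinearEquiv_comp L
  rwa [add_zero] at hfred

/-- Let `H₀, H₁` be finite-dimensional Hilbert spaces, `H₀', H₁'` Hilbert spaces
admitting an isomorphism `D₀ : H₀' → H₁'`. The set `U` of bounded operators
`F : H₀ ⊕ H₀' → H₁ ⊕ H₁'` whose lower-right block `D` (extracted via the canonical
injections/projections) is an isomorphism is open, and every `F ∈ U` is Fredholm of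
index `dim H₀ − dim H₁`. -/
theorem stmt16 {H₀ H₀' H₁ H₁' : Type u}
    [NormedAddCommGroup H₀] [InnerProductSpace ℝ H₀] [FiniteDimensional ℝ H₀]
    [NormedAddCommGroup H₀'] [InnerProductSpace ℝ H₀'] [CompleteSpace H₀']
    [NormedAddCommGroup H₁] [InnerProductSpace ℝ H₁] [FiniteDimensional ℝ H₁]
    [NormedAddCommGroup H₁'] [InnerProductSpace ℝ H₁'] [CompleteSpace H₁']
    (D₀ : H₀' ≃L[ℝ] H₁')
    (U : Set ((H₀ × H₀') →L[ℝ] (H₁ × H₁'))) (hU : U =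
      {F | ∃ e : H₀' ≃L[ℝ] H₁', (e : H₀' →L[ℝ] H₁') =
        (ContinuousLinearMap.snd ℝ H₁ H₁').comp
          (F.comp (ContinuousLinearMap.inr ℝ H₀ H₀'))}) :
    IsOpen U ∧
    ∀ F ∈ U, FiniteDimensional ℝ (LinearMap.ker (F : (H₀ × H₀') →ₗ[ℝ] (H₁ × H₁'))) ∧
      IsClosed (LinearMap.range (F : (H₀ × H₀') →ₗ[ℝ] (H₁ × H₁')) : Set (H₁ × H₁')) ∧
      FiniteDimensional ℝ ((H₁ × H₁') ⧸ LinearMap.range (F : (H₀ × H₀') →ₗ[ℝ] (H₁ × H₁'))) ∧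
      (Module.finrank ℝ (LinearMap.ker (F : (H₀ × H₀') →ₗ[ℝ] (H₁ × H₁'))) : ℤ) -
        (Module.finrank ℝ ((H₁ × H₁') ⧸ LinearMap.range (F : (H₀ × H₀') →ₗ[ℝ] (H₁ × H₁'))) : ℤ) =
      (Module.finrank ℝ H₀ : ℤ) - (Module.finrank ℝ H₁ : ℤ) :=
  stmt16_general U hU
end

section
/- Consider the path of operators F : [0,π/2] → L(ℓ²) given by F(t)(v₁,v₂,v₃,v₄,v₅,...) = (2(v₁ sin t + v₃ cos t), 2(v₂ sin t − v₄ cos t), 4(v₁ cos t − v₃ sin t) cos 2t, v₅, v₆, ...). Then for every t ∈ [0,π/2] with t ≠ π/4, the kernel of F(t) has dimension one, and for t = π/4 the kernel of F(t) has dimension two. -/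
open Real

/-!
In the 0-indexed coordinates `v₀, v₁, …` of `ℓ²`, `F(t) v = 0` says that `v` is supported on
`{0, 1, 2, 3}`, that `(v₁, v₃)` is a multiple `a (cos t, sin t)`, and that
`(v₀, v₂) = b (cos t, -sin t)` with `b cos 2t = 0`. So the kernel is spanned by
`(0, cos t, 0, sin t, 0, …)`, together with `(cos t, 0, -sin t, 0, 0, …)` exactly when
`cos 2t = 0`, i.e. when `t = π/4` on `[0, π/2]`.
-/

local notation "ℓ²" => lp (fun _ : ℕ => ℝ) 2

lemma lp.ext_of_lt_of_add {E : ℕ → Type*} [∀ i, NormedAddCommGroup (E i)] {p : ENNReal}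
    {v w : lp E p} (k : ℕ) (hlt : ∀ n < k, v n = w n) (hadd : ∀ n, v (n + k) = w (n + k)) :
    v = w := by
  ext n
  by_cases hn : n < k
  · exact hlt n hn
  · obtain ⟨m, rfl⟩ := Nat.exists_eq_add_of_le' (not_lt.mp hn)
    exact hadd m

@[simp] lemma lp_smul_add_smul_apply (a b : ℝ) (f g : ℓ²) (n : ℕ) :
    (a • f + b • g) n = a * f n + b * g n := rfl

lemma cos_two_mul_eq_zero_iff_of_mem_Icc {t : ℝ} (ht : t ∈ Set.Icc 0 (π / 2)) :
    cos (2 * t) = 0 ↔ t = π / 4 := by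
  constructor
  · intro h
    have h2t : 2 * t = π / 2 :=
      injOn_cos ⟨by linarith [ht.1], by linarith [ht.2]⟩ ⟨by positivity, by linarith [pi_pos]⟩
        (h.trans cos_pi_div_two.symm)
    linarith
  · rintro rfl
    rw [show 2 * (π / 4) = π / 2 by ring, cos_pi_div_two]

structure IsFAt (T : ℓ² →L[ℝ] ℓ²) (t : ℝ) : Prop where
  apply_zero : ∀ v : ℓ², T v 0 = 2 * (v 0 * sin t + v 2 * cos t)
  apply_one : ∀ v : ℓ², T v 1 = 2 * (v 1 * sin t - v 3 * cos t)
  apply_two : ∀ v : ℓ², T v 2 = 4 * (v 0 * cos t - v 2 * sin t) * cos (2 * t)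
  apply_add_three : ∀ (v : ℓ²) (n : ℕ), T v (n + 3) = v (n + 4)

noncomputable def oddVec (t : ℝ) : ℓ² := lp.single 2 1 (cos t) + lp.single 2 3 (sin t)

noncomputable def evenVec (t : ℝ) : ℓ² := lp.single 2 0 (cos t) - lp.single 2 2 (sin t)

@[simp] lemma oddVec_apply (t : ℝ) (n : ℕ) :
    oddVec t n = (if n = 1 then cos t else 0) + (if n = 3 then sin t else 0) := by
  simp [oddVec, lp.single_apply, Pi.single_apply]

@[simp] lemma evenVec_apply (t : ℝ) (n : ℕ) :
    evenVec t n = (if n = 0 then cos t else 0) - (if n = 2 then sin t else 0) := by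
  simp [evenVec, lp.single_apply, Pi.single_apply]

lemma oddVec_ne_zero (t : ℝ) : oddVec t ≠ 0 := by
  intro h
  have h1 : cos t = 0 := by simpa using congrArg (fun w : ℓ² => w 1) h
  have h3 : sin t = 0 := by simpa using congrArg (fun w : ℓ² => w 3) h
  simpa [h1, h3] using sin_sq_add_cos_sq t

lemma linearIndependent_oddVec_evenVec (t : ℝ) : LinearIndependent ℝ ![oddVec t, evenVec t] := by
  rw [LinearIndependent.pair_iff]
  intro a b h
  have hn : ∀ n, a * oddVec t n + b * evenVec t n = 0 := fun n => by
    rw [← lp_smul_add_smul_apply, h]; rfl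
  have h0 : b * cos t = 0 := by simpa using hn 0
  have h1 : a * cos t = 0 := by simpa using hn 1
  have h2 : b * sin t = 0 := by simpa using hn 2
  have h3 : a * sin t = 0 := by simpa using hn 3
  have pyth := sin_sq_add_cos_sq t
  constructor
  · linear_combination cos t * h1 + sin t * h3 - a * pyth
  · linear_combination cos t * h0 + sin t * h2 - b * pyth

namespace IsFAt

variable {T : ℓ² →L[ℝ] ℓ²} {t : ℝ}

lemma mem_ker_iff (hT : IsFAt T t) (v : ℓ²) :
    v ∈ LinearMap.ker T.toLinearMap ↔
      ∃ a b : ℝ, b * cos (2 * t) = 0 ∧ a • oddVec t + b • evenVec t = v := by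
  have pyth := sin_sq_add_cos_sq t
  rw [LinearMap.mem_ker, ContinuousLinearMap.coe_coe]
  constructor
  · intro hv
    have hTv : ∀ n, T v n = 0 := fun n => by rw [hv]; rfl
    have h0 := hT.apply_zero v ▸ hTv 0
    have h1 := hT.apply_one v ▸ hTv 1
    have h2 := hT.apply_two v ▸ hTv 2
    refine ⟨v 1 * cos t + v 3 * sin t, v 0 * cos t - v 2 * sin t, by linarith, ?_⟩
    refine lp.ext_of_lt_of_add 4 (fun n hn => ?_) fun n => ?_
    · interval_cases n <;>
        simp only [lp_smul_add_smul_apply, oddVec_apply, evenVec_apply, Nat.reduceEqDiff, ↓reduceIte]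
      · linear_combination -sin t * h0 / 2 + v 0 * pyth
      · linear_combination -sin t * h1 / 2 + v 1 * pyth
      · linear_combination -cos t * h0 / 2 + v 2 * pyth
      · linear_combination cos t * h1 / 2 + v 3 * pyth
    · simpa [hT.apply_add_three] using (hTv (n + 3)).symm
  · rintro ⟨a, b, hb, rfl⟩
    refine lp.ext_of_lt_of_add 3 (fun n hn => ?_) fun n => ?_
    · interval_cases n
      · simp [hT.apply_zero, mul_comm]
      · simp [hT.apply_one, mul_comm]
      · rcases mul_eq_zero.1 hb with rfl | hc <;> simp [hT.apply_two, *]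
    · rw [hT.apply_add_three]; simp

lemma ker_eq_span_singleton (hT : IsFAt T t) (hc : cos (2 * t) ≠ 0) :
    LinearMap.ker T.toLinearMap = Submodule.span ℝ {oddVec t} := by
  ext v
  rw [hT.mem_ker_iff, Submodule.mem_span_singleton]
  constructor
  · rintro ⟨a, b, hb, rfl⟩
    obtain rfl : b = 0 := (mul_eq_zero.1 hb).resolve_right hc
    exact ⟨a, by simp⟩
  · rintro ⟨a, rfl⟩
    exact ⟨a, 0, zero_mul _, by simp⟩

lemma ker_eq_span_pair (hT : IsFAt T t) (hc : cos (2 * t) = 0) :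
    LinearMap.ker T.toLinearMap = Submodule.span ℝ {oddVec t, evenVec t} := by
  ext v
  rw [hT.mem_ker_iff, Submodule.mem_span_pair]
  simp [hc]

lemma finrank_ker_of_cos_ne_zero (hT : IsFAt T t) (hc : cos (2 * t) ≠ 0) :
    Module.finrank ℝ (LinearMap.ker T.toLinearMap) = 1 := by
  rw [hT.ker_eq_span_singleton hc, finrank_span_singleton (oddVec_ne_zero t)]

lemma finrank_ker_of_cos_eq_zero (hT : IsFAt T t) (hc : cos (2 * t) = 0) :
    Module.finrank ℝ (LinearMap.ker T.toLinearMap) = 2 := by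
  rw [hT.ker_eq_span_pair hc, ← Matrix.range_cons_cons_empty _ _ ![],
    finrank_span_eq_card (linearIndependent_oddVec_evenVec t), Fintype.card_fin]

end IsFAt

/-- For the path of operators `F : [0,π/2] → L(ℓ²)` given by
`F(t)(v₁,v₂,v₃,v₄,v₅,…) = (2(v₁ sin t + v₃ cos t), 2(v₂ sin t − v₄ cos t),
4(v₁ cos t − v₃ sin t) cos 2t, v₅, v₆, …)`, the kernel of `F(t)` is one-dimensional
for `t ∈ [0,π/2] \ {π/4}` and two-dimensional for `t = π/4`. -/
theorem stmt19 (F : ℝ → lp (fun _ : ℕ => ℝ) 2 →L[ℝ] lp (fun _ : ℕ => ℝ) 2)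
    (hF0 : ∀ t : ℝ, ∀ v : lp (fun _ : ℕ => ℝ) 2,
      F t v 0 = 2 * (v 0 * sin t + v 2 * cos t))
    (hF1 : ∀ t : ℝ, ∀ v : lp (fun _ : ℕ => ℝ) 2,
      F t v 1 = 2 * (v 1 * sin t - v 3 * cos t))
    (hF2 : ∀ t : ℝ, ∀ v : lp (fun _ : ℕ => ℝ) 2,
      F t v 2 = 4 * (v 0 * cos t - v 2 * sin t) * cos (2 * t))
    (hFs : ∀ t : ℝ, ∀ v : lp (fun _ : ℕ => ℝ) 2, ∀ n : ℕ,
      F t v (n + 3) = v (n + 4)) :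
    ∀ t ∈ Set.Icc (0 : ℝ) (π / 2),
      (t ≠ π / 4 → Module.finrank ℝ (LinearMap.ker (F t).toLinearMap) = 1) ∧
      (t = π / 4 → Module.finrank ℝ (LinearMap.ker (F t).toLinearMap) = 2) := by
  intro t ht
  have hT : IsFAt (F t) t := ⟨hF0 t, hF1 t, hF2 t, hFs t⟩
  rw [ne_eq, ← cos_two_mul_eq_zero_iff_of_mem_Icc ht]
  exact ⟨hT.finrank_ker_of_cos_ne_zero, hT.finrank_ker_of_cos_eq_zero⟩
end
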